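/- arXiv:2310.00987 — 5 statements merged into one kernel-verified Lean document; each statement's English description precedes it below -/
import Mathlib

section
/- Let Λ be an M×M positive definite diagonal matrix, Ψ an M×N real matrix, λ > 0, and N a positive integer. Define K = Ψᵀ Λ Ψ, R = (K + λN I_N)⁻¹, Δ = (1/N) Ψ Ψᵀ − I_M, and P = Λ Ψ R Ψᵀ. Then P = I_M − λ (I_M + Δ + λ Λ⁻¹)⁻¹ Λ⁻¹, where I_M + Δ + λ Λ⁻¹ is invertible. -/
open Matrix

lemma pd_smul {m : Type*} [Fintype m] {A : Matrix m m ℝ} (hA : A.PosDef) {c : ℝ}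
    (hc : 0 < c) : (c • A).PosDef := by
  constructor
  · unfold Matrix.IsHermitian
    rw [conjTranspose_smul, hA.1]
    simp
  · intro x hx
    have h := hA.2 hx
    simp only [Finsupp.sum, Matrix.smul_apply, smul_eq_mul] at h ⊢
    have e : ∀ i j, star (x i) * (c * A i j) * x j = c * (star (x i) * A i j * x j) :=
      fun _ _ => by ring
    simp only [e, ← Finset.mul_sum]
    exact mul_pos hc h

lemma psd_smul {m : Type*} [Fintype m] {A : Matrix m m ℝ} (hA : A.PosSemidef) {c : ℝ}
    (hc : 0 ≤ c) : (c • A).PosSemidef := by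
  constructor
  · unfold Matrix.IsHermitian
    rw [conjTranspose_smul, hA.1]
    simp
  · intro x
    have h := hA.2 x
    simp only [Finsupp.sum, Matrix.smul_apply, smul_eq_mul] at h ⊢
    have e : ∀ i j, star (x i) * (c * A i j) * x j = c * (star (x i) * A i j * x j) :=
      fun _ _ => by ring
    simp only [e, ← Finset.mul_sum]
    exact mul_nonneg hc h

theorem stmt_0 (M N : ℕ) (hN : 0 < N) (lam : Fin M → ℝ) (hlam : ∀ k, 0 < lam k)
    (Ψ : Matrix (Fin M) (Fin N) ℝ) (l : ℝ) (hl : 0 < l) :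
    let Λ : Matrix (Fin M) (Fin M) ℝ := Matrix.diagonal lam
    let K : Matrix (Fin N) (Fin N) ℝ := Ψᵀ * Λ * Ψ
    let R : Matrix (Fin N) (Fin N) ℝ := (K + (l * (N : ℝ)) • (1 : Matrix (Fin N) (Fin N) ℝ))⁻¹
    let Δ : Matrix (Fin M) (Fin M) ℝ := ((N : ℝ)⁻¹) • (Ψ * Ψᵀ) - 1
    let P : Matrix (Fin M) (Fin M) ℝ := Λ * Ψ * R * Ψᵀ
    IsUnit (1 + Δ + l • Λ⁻¹) ∧ P = 1 - l • ((1 + Δ + l • Λ⁻¹)⁻¹ * Λ⁻¹) := by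
  intro Λ K R Δ P
  have hNne : (N : ℝ) ≠ 0 := Nat.cast_ne_zero.mpr hN.ne'
  have hΛ : Λ.PosDef := posDef_diagonal_iff.mpr hlam
  have hΛinvpd : (Λ⁻¹).PosDef := hΛ.inv
  have hΨT : Ψᴴ = Ψᵀ := conjTranspose_eq_transpose_of_trivial Ψ
  have hΨT' : (Ψᵀ)ᴴ = Ψ := by
    rw [conjTranspose_eq_transpose_of_trivial, transpose_transpose]
  -- K + l N • 1 is positive definite
  have hKpsd : K.PosSemidef := by
    have := hΛ.posSemidef.conjTranspose_mul_mul_same Ψ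
    rwa [hΨT] at this
  have hIpd : ((l * (N : ℝ)) • (1 : Matrix (Fin N) (Fin N) ℝ)).PosDef :=
    pd_smul Matrix.PosDef.one (by positivity)
  have hKR : (K + (l * (N : ℝ)) • (1 : Matrix (Fin N) (Fin N) ℝ)).PosDef :=
    Matrix.PosDef.posSemidef_add hKpsd hIpd
  -- the matrix A
  have hAeq : 1 + Δ + l • Λ⁻¹ = ((N : ℝ)⁻¹) • (Ψ * Ψᵀ) + l • Λ⁻¹ := by
    show 1 + (((N : ℝ)⁻¹) • (Ψ * Ψᵀ) - 1) + l • Λ⁻¹ = _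
    abel
  have hApd : (1 + Δ + l • Λ⁻¹).PosDef := by
    rw [hAeq]
    refine Matrix.PosDef.posSemidef_add (psd_smul ?_ (by positivity)) (pd_smul hΛinvpd hl)
    have := posSemidef_self_mul_conjTranspose Ψ
    rwa [hΨT] at this
  refine ⟨hApd.isUnit, ?_⟩
  have hRinv : (K + (l * (N : ℝ)) • (1 : Matrix (Fin N) (Fin N) ℝ)) * R = 1 :=
    mul_nonsing_inv _ ((isUnit_iff_isUnit_det _).mp hKR.isUnit)
  have hΛunit : IsUnit Λ.det := (isUnit_iff_isUnit_det _).mp hΛ.isUnit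
  -- key computation
  have key : (1 + Δ + l • Λ⁻¹) * (Λ * Ψ) = ((N : ℝ)⁻¹) • (Ψ * (K + (l * (N : ℝ)) • 1)) := by
    rw [hAeq, Matrix.add_mul, Matrix.smul_mul, Matrix.smul_mul, Matrix.mul_add, smul_add]
    have h1 : Λ⁻¹ * (Λ * Ψ) = Ψ := by
      rw [← Matrix.mul_assoc, nonsing_inv_mul _ hΛunit, Matrix.one_mul]
    have h2 : Ψ * Ψᵀ * (Λ * Ψ) = Ψ * K := by
      show _ = Ψ * (Ψᵀ * Λ * Ψ)
      rw [Matrix.mul_assoc, Matrix.mul_assoc]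
    rw [h1, h2, Matrix.mul_smul, Matrix.mul_one, smul_smul]
    congr 2
    field_simp
  have hAP : (1 + Δ + l • Λ⁻¹) * P = ((N : ℝ)⁻¹) • (Ψ * Ψᵀ) := by
    show (1 + Δ + l • Λ⁻¹) * (Λ * Ψ * R * Ψᵀ) = _
    have : (1 + Δ + l • Λ⁻¹) * (Λ * Ψ * R * Ψᵀ)
        = ((1 + Δ + l • Λ⁻¹) * (Λ * Ψ)) * R * Ψᵀ := by
      simp only [Matrix.mul_assoc]
    rw [this, key, Matrix.smul_mul, Matrix.smul_mul, Matrix.mul_assoc Ψ _ R, hRinv,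
      Matrix.mul_one]
  have hAinv : (1 + Δ + l • Λ⁻¹)⁻¹ * (1 + Δ + l • Λ⁻¹) = 1 :=
    nonsing_inv_mul _ ((isUnit_iff_isUnit_det _).mp hApd.isUnit)
  calc P = (1 + Δ + l • Λ⁻¹)⁻¹ * ((1 + Δ + l • Λ⁻¹) * P) := by
          rw [← Matrix.mul_assoc, hAinv, Matrix.one_mul]
    _ = (1 + Δ + l • Λ⁻¹)⁻¹ * ((1 + Δ + l • Λ⁻¹) - l • Λ⁻¹) := by
          rw [hAP, hAeq]; congr 1; abel
    _ = 1 - l • ((1 + Δ + l • Λ⁻¹)⁻¹ * Λ⁻¹) := by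
          rw [Matrix.mul_sub, hAinv, Matrix.mul_smul]
end

section
/- Let Λ be an M×M positive definite diagonal matrix, Ψ an M×N real matrix, λ > 0. Define K = Ψᵀ Λ Ψ, R = (K + λN I_N)⁻¹, M₀ = Ψᵀ Λ² Ψ, Δ = (1/N) Ψ Ψᵀ − I_M, and B = (I_M + Δ + λ Λ⁻¹)⁻¹. Then Tr(R M₀ R) = (1/N) · Tr(B² (I_M + Δ)). -/
/-!
With `G = Ψ Ψᵀ + c Λ⁻¹` one has the push-through identity `(Ψᵀ Λ Ψ + c) Ψᵀ = Ψᵀ Λ G`, hence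
`R Ψᵀ = Ψᵀ G⁻¹ Λ⁻¹` and, by symmetry, `Ψ R = Λ⁻¹ G⁻¹ Ψ`. The factors `Λ⁻¹` then cancel the
`Λ²` in `R Ψᵀ Λ² Ψ R`, leaving `Tr(G⁻² Ψ Ψᵀ)`. For `c = λN` the matrix `I + Δ + λΛ⁻¹` is `G / N`,
so `B = N G⁻¹` and the right-hand side is the same trace.
-/

open Matrix

namespace Matrix

variable {m n α : Type*} [Fintype m] [Fintype n] [DecidableEq m] [DecidableEq n] [CommRing α]

theorem nonsing_inv_mul_eq_mul_nonsing_inv_of_mul_eq {X : Matrix m m α} {Y : Matrix n n α}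
    {A : Matrix m n α} (hX : IsUnit X.det) (hY : IsUnit Y.det) (h : X * A = A * Y) :
    X⁻¹ * A = A * Y⁻¹ := by
  calc X⁻¹ * A = X⁻¹ * (A * Y) * Y⁻¹ := by
        rw [← Matrix.mul_assoc, mul_nonsing_inv_cancel_right _ _ hY]
    _ = A * Y⁻¹ := by rw [← h, nonsing_inv_mul_cancel_left _ _ hX]

theorem trace_resolvent_mul_mul_resolvent {Λ : Matrix m m α} (hΛ : Λ.IsSymm) (hΛu : IsUnit Λ.det)
    (Ψ : Matrix m n α) (c : α) (hK : IsUnit (Ψᵀ * Λ * Ψ + c • 1).det)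
    (hG : IsUnit (Ψ * Ψᵀ + c • Λ⁻¹).det) :
    ((Ψᵀ * Λ * Ψ + c • 1)⁻¹ * (Ψᵀ * Λ ^ 2 * Ψ) * (Ψᵀ * Λ * Ψ + c • 1)⁻¹).trace =
      ((Ψ * Ψᵀ + c • Λ⁻¹)⁻¹ ^ 2 * (Ψ * Ψᵀ)).trace := by
  set R := (Ψᵀ * Λ * Ψ + c • 1)⁻¹
  set G := Ψ * Ψᵀ + c • Λ⁻¹
  have hGsymm : G⁻¹.IsSymm := by
    refine IsSymm.inv ?_
    simp [G, IsSymm, transpose_add, transpose_mul, hΛ.inv.eq]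
  have hRsymm : R.IsSymm := by
    refine IsSymm.inv ?_
    simp [IsSymm, transpose_add, transpose_mul, hΛ.eq, Matrix.mul_assoc]
  have hpush : (Ψᵀ * Λ * Ψ + c • 1) * Ψᵀ = Ψᵀ * (Λ * G) := by
    simp only [G, Matrix.mul_add, Matrix.add_mul, Matrix.mul_smul, Matrix.smul_mul, Matrix.mul_assoc,
      mul_nonsing_inv _ hΛu, Matrix.one_mul, Matrix.mul_one]
  have hRΨ : R * Ψᵀ = Ψᵀ * G⁻¹ * Λ⁻¹ := by
    rw [nonsing_inv_mul_eq_mul_nonsing_inv_of_mul_eq hK (by rw [det_mul]; exact hΛu.mul hG) hpush,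
      Matrix.mul_inv_rev, Matrix.mul_assoc]
  have hΨR : Ψ * R = Λ⁻¹ * G⁻¹ * Ψ := by
    have h := congrArg transpose hRΨ
    rwa [transpose_mul, transpose_mul, transpose_mul, transpose_transpose, hRsymm.eq, hΛ.inv.eq,
      hGsymm.eq, ← Matrix.mul_assoc] at h
  have hΛΛ : Λ⁻¹ * Λ ^ 2 * Λ⁻¹ = 1 := by
    rw [pow_two, ← Matrix.mul_assoc, nonsing_inv_mul _ hΛu, Matrix.one_mul, mul_nonsing_inv _ hΛu]
  calc (R * (Ψᵀ * Λ ^ 2 * Ψ) * R).trace = (R * Ψᵀ * Λ ^ 2 * (Ψ * R)).trace := by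
        simp only [Matrix.mul_assoc]
    _ = (Ψᵀ * G⁻¹ * (Λ⁻¹ * Λ ^ 2 * Λ⁻¹) * G⁻¹ * Ψ).trace := by
        rw [hRΨ, hΨR]; simp only [Matrix.mul_assoc]
    _ = (Ψᵀ * (G⁻¹ ^ 2 * Ψ)).trace := by
        rw [hΛΛ, Matrix.mul_one, pow_two]; simp only [Matrix.mul_assoc]
    _ = (G⁻¹ ^ 2 * (Ψ * Ψᵀ)).trace := by rw [trace_mul_comm, Matrix.mul_assoc]

theorem posDef_transpose_mul_mul_add_smul_one {m n : Type*} [Fintype m] [Fintype n]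
    [DecidableEq n] {Λ : Matrix m m ℝ} (hΛ : Λ.PosDef) (Ψ : Matrix m n ℝ) {c : ℝ} (hc : 0 < c) :
    (Ψᵀ * Λ * Ψ + c • 1).PosDef := by
  have hK : (Ψᵀ * Λ * Ψ).PosSemidef := by
    simpa only [conjTranspose_eq_transpose_of_trivial] using
      hΛ.posSemidef.conjTranspose_mul_mul_same Ψ
  exact PosDef.posSemidef_add hK (PosDef.one.smul hc)

theorem posDef_mul_transpose_add_smul_inv {m n : Type*} [Fintype m] [Fintype n]
    [DecidableEq m] {Λ : Matrix m m ℝ} (hΛ : Λ.PosDef) (Ψ : Matrix m n ℝ) {c : ℝ} (hc : 0 < c) :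
    (Ψ * Ψᵀ + c • Λ⁻¹).PosDef := by
  have hG : (Ψ * Ψᵀ).PosSemidef := by
    simpa only [conjTranspose_eq_transpose_of_trivial] using posSemidef_self_mul_conjTranspose Ψ
  exact PosDef.posSemidef_add hG (hΛ.inv.smul hc)

theorem PosDef.isUnit_det {n : Type*} [Fintype n] [DecidableEq n] {A : Matrix n n ℝ}
    (hA : A.PosDef) : IsUnit A.det :=
  (isUnit_iff_isUnit_det A).mp hA.isUnit

end Matrix

theorem stmt_3 (M N : ℕ) (hN : 0 < N) (lam : Fin M → ℝ) (hlam : ∀ k, 0 < lam k)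
    (Ψ : Matrix (Fin M) (Fin N) ℝ) (l : ℝ) (hl : 0 < l) :
    let Λ : Matrix (Fin M) (Fin M) ℝ := Matrix.diagonal lam
    let K : Matrix (Fin N) (Fin N) ℝ := Ψᵀ * Λ * Ψ
    let R : Matrix (Fin N) (Fin N) ℝ := (K + (l * (N : ℝ)) • (1 : Matrix (Fin N) (Fin N) ℝ))⁻¹
    let M₀ : Matrix (Fin N) (Fin N) ℝ := Ψᵀ * (Λ ^ 2) * Ψ
    let Δ : Matrix (Fin M) (Fin M) ℝ := ((N : ℝ)⁻¹) • (Ψ * Ψᵀ) - 1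
    let B : Matrix (Fin M) (Fin M) ℝ := (1 + Δ + l • Λ⁻¹)⁻¹
    (R * M₀ * R).trace = ((N : ℝ)⁻¹) * (B ^ 2 * (1 + Δ)).trace := by
  intro Λ K R M₀ Δ B
  have hN' : (N : ℝ) ≠ 0 := Nat.cast_ne_zero.mpr hN.ne'
  have hc : 0 < l * N := mul_pos hl (Nat.cast_pos.mpr hN)
  have hΛ : Λ.PosDef := posDef_diagonal_iff.mpr hlam
  have hG := (posDef_mul_transpose_add_smul_inv hΛ Ψ hc).isUnit_det
  have h1Δ : 1 + Δ = (N : ℝ)⁻¹ • (Ψ * Ψᵀ) := add_sub_cancel _ _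
  have hB : B = (N : ℝ) • (Ψ * Ψᵀ + (l * N) • Λ⁻¹)⁻¹ := by
    refine inv_eq_right_inv ?_
    rw [h1Δ, show (N : ℝ)⁻¹ • (Ψ * Ψᵀ) + l • Λ⁻¹ = (N : ℝ)⁻¹ • (Ψ * Ψᵀ + (l * N) • Λ⁻¹) by
      rw [smul_add, smul_smul, mul_left_comm, inv_mul_cancel₀ hN', mul_one], smul_mul_smul_comm,
      inv_mul_cancel₀ hN', mul_nonsing_inv _ hG, one_smul]
  rw [trace_resolvent_mul_mul_resolvent (Λ := Λ) (isSymm_diagonal lam) hΛ.isUnit_det Ψ (l * N)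
    (posDef_transpose_mul_mul_add_smul_one hΛ Ψ hc).isUnit_det hG, hB, h1Δ, smul_pow,
    smul_mul_smul_comm, trace_smul, smul_eq_mul]
  field_simp
end

section
/- Let Λ = diag(λ₁,…,λ_M) with λ_k > 0, λ > 0, Δ an M×M symmetric matrix with δ := ‖Δ‖_op < 1/2, P̄ = Λ(Λ+λI_M)⁻¹, and B = (I_M + Δ + λΛ⁻¹)⁻¹. Then for every w ∈ ℝ^M: ‖Bw‖₂² ≤ (1 + 2δ)‖P̄w‖₂² + δ²(5 + 4δ + 4δ²)‖w‖₂², and ‖Bw‖₂² ≥ (1 − 2δ)‖P̄w‖₂² − δ²(5 + 4δ + 4δ²)‖w‖₂². -/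
open Matrix

noncomputable def opNorm {m n : Type*} [Fintype m] [Fintype n] [DecidableEq n]
    (A : Matrix m n ℝ) : ℝ :=
  ‖LinearMap.toContinuousLinearMap (Matrix.toEuclideanLin A)‖

noncomputable def eunorm {m : Type*} [Fintype m] (v : m → ℝ) : ℝ :=
  Real.sqrt (∑ i, v i ^ 2)

/-!
Write `T := P̄Δ`, so that `‖T‖ ≤ δ < 1/2` because `‖P̄‖ ≤ 1`. Since `P̄⁻¹ = I + λΛ⁻¹`, the matrix
inverted in `B` factors as `P̄⁻¹(I + T)`, whence `B = (I + T)⁻¹P̄`, i.e. `B = P̄ - T B`. Substituting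
this identity into itself gives `B - P̄ = -T P̄ + T² B`, so `‖Bw‖` differs from `‖P̄w‖` by at most
`δ‖P̄w‖ + δ²‖Bw‖`, and `‖Bw‖ ≤ 2‖w‖` from `‖Bw‖ ≤ ‖P̄w‖ + δ‖Bw‖`. Squaring these two-sided bounds
gives the claim.
-/

open scoped Matrix.Norms.L2Operator

lemma eunorm_eq_norm_toLp {m : Type*} [Fintype m] (v : m → ℝ) :
    eunorm v = ‖WithLp.toLp 2 v‖ := by
  simp [eunorm, EuclideanSpace.norm_eq]

lemma sq_le_of_abs_sub_le {δ a b n : ℝ} (hδ : 0 ≤ δ) (ha : 0 ≤ a) (han : a ≤ n) (hb : 0 ≤ b)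
    (h : |b - a| ≤ δ * a + 2 * δ ^ 2 * n) :
    b ^ 2 ≤ (1 + 2 * δ) * a ^ 2 + δ ^ 2 * (5 + 4 * δ + 4 * δ ^ 2) * n ^ 2 := by
  have hb' : b ≤ (1 + δ) * a + 2 * δ ^ 2 * n := by linarith [le_abs_self (b - a)]
  have hsq : b ^ 2 ≤ ((1 + δ) * a + 2 * δ ^ 2 * n) ^ 2 := pow_le_pow_left₀ hb hb' 2
  have han2 : a * n ≤ n ^ 2 := by nlinarith
  have ha2 : a ^ 2 ≤ n ^ 2 := by nlinarith
  nlinarith [mul_le_mul_of_nonneg_left han2 (by positivity : 0 ≤ 4 * δ ^ 2 * (1 + δ)),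
    mul_le_mul_of_nonneg_left ha2 (sq_nonneg δ)]

lemma le_sq_of_abs_sub_le {δ a b n : ℝ} (hδ : 0 ≤ δ) (ha : 0 ≤ a) (han : a ≤ n)
    (h : |b - a| ≤ δ * a + 2 * δ ^ 2 * n) :
    (1 - 2 * δ) * a ^ 2 - δ ^ 2 * (5 + 4 * δ + 4 * δ ^ 2) * n ^ 2 ≤ b ^ 2 := by
  have hb' : (1 - δ) * a - 2 * δ ^ 2 * n ≤ b := by linarith [neg_abs_le (b - a)]
  have han0 : 0 ≤ a * n := mul_nonneg ha (ha.trans han)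
  have han2 : a * n ≤ n ^ 2 := by nlinarith
  have ha2 : a ^ 2 ≤ n ^ 2 := by nlinarith
  have hC : 0 ≤ δ ^ 2 * (5 + 4 * δ + 4 * δ ^ 2) * n ^ 2 := by positivity
  rcases le_total 0 ((1 - δ) * a - 2 * δ ^ 2 * n) with hx | hx
  · have hsq := pow_le_pow_left₀ hx hb' 2
    nlinarith [mul_le_mul_of_nonneg_left han2 (by positivity : 0 ≤ 4 * δ ^ 2),
      mul_nonneg (pow_nonneg hδ 3) han0, mul_nonneg (sq_nonneg δ) (sq_nonneg a),
      mul_nonneg (sq_nonneg δ) (sq_nonneg n), mul_nonneg (pow_nonneg hδ 3) (sq_nonneg n),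
      mul_nonneg (pow_nonneg hδ 4) (sq_nonneg n)]
  · rcases le_total δ 1 with hδ1 | hδ1
    · have h1 : (1 - δ) * a ≤ 2 * δ ^ 2 * n := by linarith
      have h2 := pow_le_pow_left₀ (by nlinarith) h1 2
      nlinarith [sq_nonneg b, sq_nonneg (δ * a),
        mul_le_mul_of_nonneg_left (sq_nonneg δ) (sq_nonneg n)]
    · nlinarith [sq_nonneg b, sq_nonneg a]

section ResolventIdentity

variable {𝕜 E : Type*} [NontriviallyNormedField 𝕜] [SeminormedAddCommGroup E] [NormedSpace 𝕜 E]
  {U P T : E →L[𝕜] E}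

lemma apply_eq_sub_of_eq_sub_mul (h : U = P - T * U) (x : E) : U x = P x - T (U x) := by
  conv_lhs => rw [h]
  rfl

lemma norm_apply_le_of_eq_sub_mul (h : U = P - T * U) (x : E) :
    ‖U x‖ ≤ ‖P x‖ + ‖T‖ * ‖U x‖ :=
  calc ‖U x‖ = ‖P x - T (U x)‖ := by rw [← apply_eq_sub_of_eq_sub_mul h]
    _ ≤ ‖P x‖ + ‖T (U x)‖ := norm_sub_le _ _
    _ ≤ ‖P x‖ + ‖T‖ * ‖U x‖ := by gcongr; exact T.le_opNorm _

lemma norm_sub_apply_le_of_eq_sub_mul (h : U = P - T * U) (x : E) :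
    ‖U x - P x‖ ≤ ‖T‖ * ‖P x‖ + ‖T‖ ^ 2 * ‖U x‖ := by
  have hUx := apply_eq_sub_of_eq_sub_mul h x
  have hTUx : T (U x) = T (P x) - T (T (U x)) := by rw [← map_sub, ← hUx]
  have hx : U x - P x = T (T (U x)) - T (P x) := by
    linear_combination (norm := module) hUx - hTUx
  calc ‖U x - P x‖ = ‖T (T (U x)) - T (P x)‖ := by rw [hx]
    _ ≤ ‖T (T (U x))‖ + ‖T (P x)‖ := norm_sub_le _ _
    _ ≤ ‖T‖ * (‖T‖ * ‖U x‖) + ‖T‖ * ‖P x‖ := by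
      gcongr
      · exact T.le_opNorm_of_le (T.le_opNorm _)
      · exact T.le_opNorm _
    _ = ‖T‖ * ‖P x‖ + ‖T‖ ^ 2 * ‖U x‖ := by ring

lemma abs_norm_sub_norm_le_of_eq_sub_mul {δ : ℝ} (h : U = P - T * U) (hP : ‖P‖ ≤ 1)
    (hT : ‖T‖ ≤ δ) (hδ : δ ≤ 1 / 2) (x : E) :
    |‖U x‖ - ‖P x‖| ≤ δ * ‖P x‖ + 2 * δ ^ 2 * ‖x‖ := by
  have hT0 := norm_nonneg T
  have hPx : ‖P x‖ ≤ ‖x‖ := P.le_of_opNorm_le hP x |>.trans_eq (one_mul _)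
  have hUx : ‖U x‖ ≤ 2 * ‖x‖ := by
    nlinarith [norm_apply_le_of_eq_sub_mul h x, norm_nonneg (U x)]
  calc |‖U x‖ - ‖P x‖| ≤ ‖U x - P x‖ := abs_norm_sub_norm_le _ _
    _ ≤ ‖T‖ * ‖P x‖ + ‖T‖ ^ 2 * ‖U x‖ := norm_sub_apply_le_of_eq_sub_mul h x
    _ ≤ δ * ‖P x‖ + δ ^ 2 * (2 * ‖x‖) := by gcongr
    _ = δ * ‖P x‖ + 2 * δ ^ 2 * ‖x‖ := by ring

end ResolventIdentity

namespace Matrix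

lemma inv_add_eq_sub_mul_inv {n α : Type*} [Fintype n] [DecidableEq n] [CommRing α]
    {D P Δ : Matrix n n α} (hDP : D * P = 1) (hu : IsUnit (1 + P * Δ)) :
    (D + Δ)⁻¹ = P - P * Δ * (D + Δ)⁻¹ := by
  obtain ⟨C, hC⟩ := hu
  have hD : D + Δ = D * C := by rw [hC, mul_add, mul_one, ← mul_assoc, hDP, one_mul]
  have hinv : (D + Δ)⁻¹ = (↑C⁻¹ : Matrix n n α) * P :=
    inv_eq_right_inv <| by rw [hD, mul_assoc, Units.mul_inv_cancel_left, hDP]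
  rw [eq_sub_iff_add_eq, ← one_add_mul, hinv, ← hC, Units.mul_inv_cancel_left]

section Diagonal

variable {n : Type*} [Fintype n] [DecidableEq n]

lemma inv_diagonal_of_ne_zero {K : Type*} [Field K] {v : n → K} (hv : ∀ i, v i ≠ 0) :
    (diagonal v)⁻¹ = diagonal v⁻¹ :=
  inv_eq_left_inv <| by
    rw [diagonal_mul_diagonal, ← diagonal_one]
    exact congrArg diagonal (funext fun i => inv_mul_cancel₀ (hv i))

variable {lam : n → ℝ} {l : ℝ}

lemma diagonal_mul_inv_diagonal_add_smul_one (h : ∀ k, lam k + l ≠ 0) :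
    diagonal lam * (diagonal lam + l • 1)⁻¹ = diagonal fun k => lam k / (lam k + l) := by
  rw [smul_one_eq_diagonal, diagonal_add, inv_diagonal_of_ne_zero h, diagonal_mul_diagonal]
  rfl

lemma one_add_smul_inv_diagonal_mul_diagonal_div (hlam : ∀ k, lam k ≠ 0)
    (h : ∀ k, lam k + l ≠ 0) :
    (1 + l • (diagonal lam)⁻¹) * diagonal (fun k => lam k / (lam k + l)) = 1 := by
  rw [inv_diagonal_of_ne_zero hlam, ← diagonal_smul, ← diagonal_one, diagonal_add,
    diagonal_mul_diagonal]
  refine congrArg diagonal (funext fun k => ?_)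
  have := hlam k
  have := h k
  simp only [Pi.smul_apply, Pi.inv_apply, smul_eq_mul]
  field_simp

lemma l2_opNorm_diagonal_div_add_le_one (hlam : ∀ k, 0 ≤ lam k) (hl : 0 ≤ l) :
    ‖(diagonal fun k => lam k / (lam k + l) : Matrix n n ℝ)‖ ≤ 1 := by
  rw [l2_opNorm_diagonal]
  refine (pi_norm_le_iff_of_nonneg zero_le_one).2 fun k => ?_
  have := hlam k
  rw [Real.norm_of_nonneg (by positivity)]
  exact div_le_one_of_le₀ (by linarith) (by positivity)

end Diagonal

end Matrix

theorem stmt_8_general (M : ℕ) (lam : Fin M → ℝ) (hlam : ∀ k, 0 < lam k) (l : ℝ) (hl : 0 < l)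
    (Δ : Matrix (Fin M) (Fin M) ℝ) (hδ : opNorm Δ < 1 / 2) :
    let δ : ℝ := opNorm Δ
    let Λ : Matrix (Fin M) (Fin M) ℝ := Matrix.diagonal lam
    let P : Matrix (Fin M) (Fin M) ℝ := Λ * (Λ + l • 1)⁻¹
    let B : Matrix (Fin M) (Fin M) ℝ := (1 + Δ + l • Λ⁻¹)⁻¹
    ∀ w : Fin M → ℝ,
      eunorm (B *ᵥ w) ^ 2
          ≤ (1 + 2 * δ) * eunorm (P *ᵥ w) ^ 2
            + δ ^ 2 * (5 + 4 * δ + 4 * δ ^ 2) * eunorm w ^ 2 ∧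
      eunorm (B *ᵥ w) ^ 2
          ≥ (1 - 2 * δ) * eunorm (P *ᵥ w) ^ 2
            - δ ^ 2 * (5 + 4 * δ + 4 * δ ^ 2) * eunorm w ^ 2 := by
  intro δ Λ P B w
  have hlam_l k : lam k + l ≠ 0 := (add_pos (hlam k) hl).ne'
  have hP : P = diagonal fun k => lam k / (lam k + l) :=
    diagonal_mul_inv_diagonal_add_smul_one hlam_l
  have hPnorm : ‖P‖ ≤ 1 := hP ▸ l2_opNorm_diagonal_div_add_le_one (fun k => (hlam k).le) hl.le
  -- `opNorm` is definitionally the L² operator norm `‖·‖` on matrices.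
  have hPΔ : ‖P * Δ‖ ≤ δ :=
    (l2_opNorm_mul P Δ).trans (mul_le_of_le_one_left (norm_nonneg _) hPnorm)
  have hunit : IsUnit (1 + P * Δ) := sub_neg_eq_add 1 (P * Δ) ▸
    isUnit_one_sub_of_norm_lt_one (by rw [norm_neg]; exact hPΔ.trans_lt (by linarith))
  have hB : B = P - P * Δ * B := by
    have hDP : (1 + l • Λ⁻¹) * P = 1 := by
      rw [hP]
      exact one_add_smul_inv_diagonal_mul_diagonal_div (fun k => (hlam k).ne') hlam_l
    show (1 + Δ + l • Λ⁻¹)⁻¹ = P - P * Δ * (1 + Δ + l • Λ⁻¹)⁻¹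
    rw [add_right_comm]
    exact inv_add_eq_sub_mul_inv hDP hunit
  have hU := congrArg (toEuclideanCLM (n := Fin M) (𝕜 := ℝ)) hB
  rw [map_sub, map_mul _ (P * Δ) B] at hU
  have hPw := (toEuclideanCLM (n := Fin M) (𝕜 := ℝ) P).le_of_opNorm_le hPnorm (WithLp.toLp 2 w)
  rw [one_mul] at hPw
  have key := abs_norm_sub_norm_le_of_eq_sub_mul hU hPnorm hPΔ hδ.le (WithLp.toLp 2 w)
  simp only [eunorm_eq_norm_toLp, ← toEuclideanCLM_toLp (𝕜 := ℝ)]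
  have hδ0 : 0 ≤ δ := norm_nonneg _
  exact ⟨sq_le_of_abs_sub_le hδ0 (norm_nonneg _) hPw (norm_nonneg _) key,
    le_sq_of_abs_sub_le hδ0 (norm_nonneg _) hPw key⟩

theorem stmt_8 (M : ℕ) (lam : Fin M → ℝ) (hlam : ∀ k, 0 < lam k) (l : ℝ) (hl : 0 < l)
    (Δ : Matrix (Fin M) (Fin M) ℝ) (hsym : Δᵀ = Δ) (hδ : opNorm Δ < 1 / 2) :
    let δ : ℝ := opNorm Δ
    let Λ : Matrix (Fin M) (Fin M) ℝ := Matrix.diagonal lam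
    let P : Matrix (Fin M) (Fin M) ℝ := Λ * (Λ + l • 1)⁻¹
    let B : Matrix (Fin M) (Fin M) ℝ := (1 + Δ + l • Λ⁻¹)⁻¹
    ∀ w : Fin M → ℝ,
      eunorm (B *ᵥ w) ^ 2
          ≤ (1 + 2 * δ) * eunorm (P *ᵥ w) ^ 2
            + δ ^ 2 * (5 + 4 * δ + 4 * δ ^ 2) * eunorm w ^ 2 ∧
      eunorm (B *ᵥ w) ^ 2
          ≥ (1 - 2 * δ) * eunorm (P *ᵥ w) ^ 2
            - δ ^ 2 * (5 + 4 * δ + 4 * δ ^ 2) * eunorm w ^ 2 :=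
  stmt_8_general M lam hlam l hl Δ hδ
end

section
/- Let Λ = diag(λ₁,…,λ_M) with λ₁ ≥ … ≥ λ_M > 0, λ > 0, Δ an M×M symmetric matrix with δ := ‖Δ‖_op < 1/2, P̄ = Λ(Λ+λI_M)⁻¹, B = (I_M + Δ + λΛ⁻¹)⁻¹. Then | Tr(B²(I_M + Δ)) − Σ_{k=1}^{M} λ_k²/(λ_k+λ)² | ≤ δ · Σ_{k=1}^{M} λ_k²/(λ_k+λ)² + M (1+δ) δ² (5 + 4δ + 4δ²). -/
set_option maxHeartbeats 4000000

open Matrix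

section API
variable {n : Type*} [Fintype n] [DecidableEq n]

lemma opNorm_eq (A : Matrix n n ℝ) :
    opNorm A = ‖Matrix.toEuclideanCLM (𝕜 := ℝ) A‖ := rfl

lemma opNorm_nonneg (A : Matrix n n ℝ) : 0 ≤ opNorm A := norm_nonneg _

lemma opNorm_mul_le (A B : Matrix n n ℝ) : opNorm (A * B) ≤ opNorm A * opNorm B := by
  rw [opNorm_eq, opNorm_eq, opNorm_eq, _root_.map_mul]
  exact norm_mul_le _ _

lemma opNorm_add_le (A B : Matrix n n ℝ) : opNorm (A + B) ≤ opNorm A + opNorm B := by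
  rw [opNorm_eq, opNorm_eq, opNorm_eq, _root_.map_add]
  exact norm_add_le _ _

lemma opNorm_neg (A : Matrix n n ℝ) : opNorm (-A) = opNorm A := by
  rw [opNorm_eq, opNorm_eq, map_neg, norm_neg]

lemma opNorm_one_le : opNorm (1 : Matrix n n ℝ) ≤ 1 := by
  rw [opNorm_eq, _root_.map_one]
  exact ContinuousLinearMap.norm_id_le

lemma isUnit_one_add (X : Matrix n n ℝ) (h : opNorm X < 1) : IsUnit (1 + X) := by
  have h1 : ‖-(Matrix.toEuclideanCLM (𝕜 := ℝ) X)‖ < 1 := by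
    rwa [norm_neg, ← opNorm_eq]
  have hu : IsUnit (1 - (-(Matrix.toEuclideanCLM (𝕜 := ℝ) X))) := (Units.oneSub _ h1).isUnit
  rw [sub_neg_eq_add] at hu
  have hu2 : IsUnit (Matrix.toEuclideanCLM (𝕜 := ℝ) (1 + X)) := by
    rwa [_root_.map_add, _root_.map_one]
  have h3 := hu2.map (Matrix.toEuclideanCLM (𝕜 := ℝ)).toRingEquiv.symm
  rwa [show (Matrix.toEuclideanCLM (𝕜 := ℝ)).toRingEquiv.symm
      ((Matrix.toEuclideanCLM (𝕜 := ℝ)) (1 + X)) = 1 + X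
    from RingEquiv.symm_apply_apply _ _] at h3

lemma coord_le_norm (x : EuclideanSpace ℝ n) (i : n) : |x i| ≤ ‖x‖ := by
  rw [EuclideanSpace.norm_eq]
  have h1 : |x i| = Real.sqrt (‖x i‖ ^ 2) := by
    rw [Real.sqrt_sq_eq_abs]; simp
  rw [h1]
  apply Real.sqrt_le_sqrt
  exact Finset.single_le_sum (f := fun i => ‖x i‖ ^ 2) (fun j _ => sq_nonneg _) (Finset.mem_univ i)

lemma toEuclideanCLM_apply_coord (A : Matrix n n ℝ) (x : EuclideanSpace ℝ n) (i : n) :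
    (Matrix.toEuclideanCLM (𝕜 := ℝ) A x) i = A.mulVec x i := rfl

lemma opNorm_entry_le (A : Matrix n n ℝ) (i j : n) : |A i j| ≤ opNorm A := by
  have h := coord_le_norm (Matrix.toEuclideanCLM (𝕜 := ℝ) A (EuclideanSpace.single j (1:ℝ))) i
  rw [toEuclideanCLM_apply_coord] at h
  have h2 : A.mulVec (EuclideanSpace.single j (1:ℝ) : n → ℝ) i = A i j := by
    show A.mulVec (Pi.single j (1:ℝ)) i = A i j
    rw [Matrix.mulVec_single]
    simp
  rw [h2] at h
  calc |A i j| ≤ ‖Matrix.toEuclideanCLM (𝕜 := ℝ) A (EuclideanSpace.single j (1:ℝ))‖ := h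
    _ ≤ ‖Matrix.toEuclideanCLM (𝕜 := ℝ) A‖ * ‖EuclideanSpace.single j (1:ℝ)‖ :=
        ContinuousLinearMap.le_opNorm _ _
    _ = opNorm A := by rw [EuclideanSpace.norm_single, norm_one, mul_one, opNorm_eq]

lemma abs_trace_le (A : Matrix n n ℝ) : |A.trace| ≤ (Fintype.card n : ℝ) * opNorm A := by
  calc |A.trace| = |∑ i, A i i| := by rw [Matrix.trace]; rfl
    _ ≤ ∑ i : n, |A i i| := Finset.abs_sum_le_sum_abs _ _
    _ ≤ ∑ _i : n, opNorm A := Finset.sum_le_sum (fun i _ => opNorm_entry_le A i i)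
    _ = (Fintype.card n : ℝ) * opNorm A := by simp [Finset.sum_const, mul_comm]

lemma opNorm_diagonal_le (d : n → ℝ) (c : ℝ) (hc : 0 ≤ c) (h : ∀ i, |d i| ≤ c) :
    opNorm (Matrix.diagonal d) ≤ c := by
  rw [opNorm_eq]
  apply ContinuousLinearMap.opNorm_le_bound _ hc
  intro x
  rw [EuclideanSpace.norm_eq, EuclideanSpace.norm_eq]
  have key : ∀ i, ‖(Matrix.toEuclideanCLM (𝕜 := ℝ) (Matrix.diagonal d) x) i‖ ^ 2
      ≤ c ^ 2 * ‖x i‖ ^ 2 := by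
    intro i
    rw [toEuclideanCLM_apply_coord, Matrix.mulVec_diagonal]
    rw [Real.norm_eq_abs, Real.norm_eq_abs, abs_mul, mul_pow]
    have h1 := h i
    have h2 : |d i| ^ 2 ≤ c ^ 2 := by nlinarith [abs_nonneg (d i)]
    exact mul_le_mul_of_nonneg_right h2 (sq_nonneg _)
  calc Real.sqrt (∑ i, ‖(Matrix.toEuclideanCLM (𝕜 := ℝ) (Matrix.diagonal d) x) i‖ ^ 2)
      ≤ Real.sqrt (∑ i, c ^ 2 * ‖x i‖ ^ 2) := Real.sqrt_le_sqrt (Finset.sum_le_sum fun i _ => key i)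
    _ = Real.sqrt (c ^ 2 * ∑ i, ‖x i‖ ^ 2) := by rw [Finset.mul_sum]
    _ = c * Real.sqrt (∑ i, ‖x i‖ ^ 2) := by
        rw [Real.sqrt_mul (sq_nonneg c), Real.sqrt_sq hc]

lemma trace_diag_sandwich (f g : n → ℝ) (D : Matrix n n ℝ) :
    (Matrix.diagonal f * D * Matrix.diagonal g).trace = ∑ k, f k * D k k * g k := by
  rw [Matrix.trace]
  congr 1
  funext k
  rw [Matrix.diag]
  rw [Matrix.mul_diagonal, Matrix.diagonal_mul]

end API
theorem stmt_9 (M : ℕ) (lam : Fin M → ℝ) (hlam : ∀ k, 0 < lam k) (hmono : Antitone lam)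
    (l : ℝ) (hl : 0 < l)
    (Δ : Matrix (Fin M) (Fin M) ℝ) (hsym : Δᵀ = Δ) (hδ : opNorm Δ < 1 / 2) :
    let δ : ℝ := opNorm Δ
    let Λ : Matrix (Fin M) (Fin M) ℝ := Matrix.diagonal lam
    let P : Matrix (Fin M) (Fin M) ℝ := Λ * (Λ + l • 1)⁻¹
    let B : Matrix (Fin M) (Fin M) ℝ := (1 + Δ + l • Λ⁻¹)⁻¹
    |(B ^ 2 * (1 + Δ)).trace - ∑ k, lam k ^ 2 / (lam k + l) ^ 2|
      ≤ δ * (∑ k, lam k ^ 2 / (lam k + l) ^ 2)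
        + (M : ℝ) * (1 + δ) * δ ^ 2 * (5 + 4 * δ + 4 * δ ^ 2) := by
  intro δ Λ P B
  have hδ_def : δ = opNorm Δ := rfl
  have hB_def0 : B = (1 + Δ + l • Λ⁻¹)⁻¹ := rfl
  have hΛ_def : Λ = Matrix.diagonal lam := rfl
  clear_value δ Λ P B
  clear P hmono hsym
  subst hδ_def
  subst hΛ_def
  -- basic positivity facts
  have hδ0 : 0 ≤ (opNorm Δ) := opNorm_nonneg Δ
  have hδ2 : (opNorm Δ) < 1 / 2 := hδ
  have hlamne : ∀ k, lam k ≠ 0 := fun k => (hlam k).ne'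
  have hlaml : ∀ k, (0:ℝ) < lam k + l := fun k => add_pos (hlam k) hl
  have hlamlne : ∀ k, lam k + l ≠ 0 := fun k => (hlaml k).ne'
  -- the diagonal entries
  set p : Fin M → ℝ := fun k => lam k / (lam k + l) with hp_def
  set q : Fin M → ℝ := fun k => (lam k + l) / lam k with hq_def
  have hp_pos : ∀ k, 0 < p k := fun k => div_pos (hlam k) (hlaml k)
  have hp_lt : ∀ k, p k < 1 := fun k => by
    rw [hp_def]
    exact (div_lt_one (hlaml k)).2 (by linarith [hl])
  have hpq : ∀ k, p k * q k = 1 := fun k => by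
    rw [hp_def, hq_def]
    rw [div_mul_div_comm, div_eq_one_iff_eq (mul_ne_zero (hlamlne k) (hlamne k))]
    ring
  -- the key diagonal matrices
  set dp : Matrix (Fin M) (Fin M) ℝ := Matrix.diagonal p with hdp_def
  set dq : Matrix (Fin M) (Fin M) ℝ := Matrix.diagonal q with hdq_def
  have hdpdq : dp * dq = 1 := by
    rw [hdp_def, hdq_def, Matrix.diagonal_mul_diagonal]
    rw [show (fun k => p k * q k) = fun _ => (1:ℝ) from funext hpq]
    exact Matrix.diagonal_one
  have hdqdp : dq * dp = 1 := by
    rw [hdp_def, hdq_def, Matrix.diagonal_mul_diagonal]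
    rw [show (fun k => q k * p k) = fun _ => (1:ℝ) from funext (fun k => by
      rw [mul_comm]; exact hpq k)]
    exact Matrix.diagonal_one
  -- (Matrix.diagonal lam)⁻¹
  have hΛinv : (Matrix.diagonal lam)⁻¹ = Matrix.diagonal (fun k => (lam k)⁻¹) := by
    apply Matrix.inv_eq_left_inv
    rw [Matrix.diagonal_mul_diagonal]
    rw [show (fun k => (lam k)⁻¹ * lam k) = fun _ => (1:ℝ) from funext (fun k =>
      inv_mul_cancel₀ (hlamne k))]
    exact Matrix.diagonal_one
  -- L := l • (Matrix.diagonal lam)⁻¹ as a diagonal matrix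
  set L : Matrix (Fin M) (Fin M) ℝ := l • (Matrix.diagonal lam)⁻¹ with hL_def
  have hL_diag : L = Matrix.diagonal (fun k => l / lam k) := by
    rw [hL_def, hΛinv]
    ext i j
    by_cases h : i = j <;> simp [Matrix.diagonal_apply, h, div_eq_mul_inv, mul_comm]
  have hA_eq : 1 + Δ + L = dq + Δ := by
    rw [hL_diag, hdq_def]
    have : (1 : Matrix (Fin M) (Fin M) ℝ) = Matrix.diagonal (fun _ => (1:ℝ)) :=
      Matrix.diagonal_one.symm
    rw [this, add_right_comm, Matrix.diagonal_add]
    congr 1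
    apply congrArg Matrix.diagonal
    funext k
    rw [hq_def]
    field_simp [hlamne k]
  -- X, Y and their norms
  set X : Matrix (Fin M) (Fin M) ℝ := dp * Δ with hX_def
  set Y : Matrix (Fin M) (Fin M) ℝ := Δ * dp with hY_def
  have hdp_norm : opNorm dp ≤ 1 := by
    apply opNorm_diagonal_le _ _ zero_le_one
    intro i
    rw [abs_of_pos (hp_pos i)]
    exact (hp_lt i).le
  have hX_norm : opNorm X ≤ (opNorm Δ) := by
    calc opNorm X ≤ opNorm dp * opNorm Δ := opNorm_mul_le _ _
      _ ≤ 1 * (opNorm Δ) := mul_le_mul_of_nonneg_right hdp_norm hδ0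
      _ = (opNorm Δ) := one_mul (opNorm Δ)
  have hY_norm : opNorm Y ≤ (opNorm Δ) := by
    calc opNorm Y ≤ opNorm Δ * opNorm dp := opNorm_mul_le _ _
      _ ≤ (opNorm Δ) * 1 := mul_le_mul_of_nonneg_left hdp_norm hδ0
      _ = (opNorm Δ) := mul_one (opNorm Δ)
  have hXu : IsUnit (1 + X) := isUnit_one_add X (by linarith)
  have hYu : IsUnit (1 + Y) := isUnit_one_add Y (by linarith)
  -- factorizations of A
  have hfact1 : 1 + Δ + L = dq * (1 + X) := by
    rw [mul_add, mul_one, hX_def, ← mul_assoc, hdqdp, one_mul, hA_eq]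
  have hfact2 : 1 + Δ + L = (1 + Y) * dq := by
    rw [add_mul, one_mul, hY_def, mul_assoc, hdpdq, mul_one, hA_eq, add_comm dq Δ]
  have hdqu : IsUnit dq := ⟨⟨dq, dp, hdqdp, hdpdq⟩, rfl⟩
  have hAu : IsUnit (1 + Δ + L) := by rw [hfact1]; exact hdqu.mul hXu
  -- inverses
  set V : Matrix (Fin M) (Fin M) ℝ := (1 + X)⁻¹ with hV_def
  set W : Matrix (Fin M) (Fin M) ℝ := (1 + Y)⁻¹ with hW_def
  have hVl : V * (1 + X) = 1 := Matrix.nonsing_inv_mul _ ((Matrix.isUnit_iff_isUnit_det _).mp hXu)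
  have hVr : (1 + X) * V = 1 := Matrix.mul_nonsing_inv _ ((Matrix.isUnit_iff_isUnit_det _).mp hXu)
  have hWl : W * (1 + Y) = 1 := Matrix.nonsing_inv_mul _ ((Matrix.isUnit_iff_isUnit_det _).mp hYu)
  have hWr : (1 + Y) * W = 1 := Matrix.mul_nonsing_inv _ ((Matrix.isUnit_iff_isUnit_det _).mp hYu)
  have hdq_inv : dq⁻¹ = dp := Matrix.inv_eq_left_inv hdpdq
  have hB_def : B = (1 + Δ + L)⁻¹ := hB_def0
  have hBA : B * (1 + Δ + L) = 1 := by
    rw [hB_def]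
    exact Matrix.nonsing_inv_mul _ ((Matrix.isUnit_iff_isUnit_det _).mp hAu)
  have hAB : (1 + Δ + L) * B = 1 := by
    rw [hB_def]
    exact Matrix.mul_nonsing_inv _ ((Matrix.isUnit_iff_isUnit_det _).mp hAu)
  have hB1 : B = V * dp := by
    rw [hB_def, hfact1, Matrix.mul_inv_rev, hdq_inv, hV_def]
  have hB2 : B = dp * W := by
    rw [hB_def, hfact2, Matrix.mul_inv_rev, hdq_inv, hW_def]
  clear_value dp dq L X Y V W
  -- C and E
  set C : Matrix (Fin M) (Fin M) ℝ := B - dp with hC_def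
  have hXC : (1 + X) * C = -(X * dp) := by
    rw [hC_def, mul_sub, hB1, ← mul_assoc, hVr, one_mul]
    rw [add_mul, one_mul]
    abel
  have hC_eq : C = -(V * (X * dp)) := by
    calc C = (V * (1 + X)) * C := by rw [hVl, one_mul]
      _ = V * ((1 + X) * C) := by rw [mul_assoc]
      _ = V * (-(X * dp)) := by rw [hXC]
      _ = -(V * (X * dp)) := by rw [mul_neg]
  set E : Matrix (Fin M) (Fin M) ℝ := C + dp * Δ * dp with hE_def
  have hXdp : dp * Δ * dp = X * dp := by rw [hX_def]
  have hE_eq : E = V * (X * (X * dp)) := by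
    have h1 : (1 + X) * E = X * (X * dp) := by
      rw [hE_def, mul_add, hXC, hXdp, add_mul, one_mul]
      abel
    calc E = (V * (1 + X)) * E := by rw [hVl, one_mul]
      _ = V * ((1 + X) * E) := by rw [mul_assoc]
      _ = V * (X * (X * dp)) := by rw [h1]
  clear_value C E
  -- norm facts
  set nV : ℝ := opNorm V with hnV_def
  set nW : ℝ := opNorm W with hnW_def
  have hnV0 : 0 ≤ nV := opNorm_nonneg V
  have hnW0 : 0 ≤ nW := opNorm_nonneg W
  have hV_fix : V = 1 - X * V := by
    have h := hVr
    rw [add_mul, one_mul] at h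
    rw [eq_sub_iff_add_eq]
    exact h
  have hW_fix : W = 1 - Y * W := by
    have h := hWr
    rw [add_mul, one_mul] at h
    rw [eq_sub_iff_add_eq]
    exact h
  have hV_norm : nV ≤ 1 + (opNorm Δ) * nV := by
    calc nV = opNorm (1 + -(X * V)) := by rw [← sub_eq_add_neg, ← hV_fix]
      _ ≤ opNorm (1 : Matrix (Fin M) (Fin M) ℝ) + opNorm (-(X * V)) := opNorm_add_le _ _
      _ = opNorm (1 : Matrix (Fin M) (Fin M) ℝ) + opNorm (X * V) := by rw [opNorm_neg]
      _ ≤ 1 + opNorm X * opNorm V := add_le_add opNorm_one_le (opNorm_mul_le _ _)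
      _ ≤ 1 + (opNorm Δ) * nV := by
          refine add_le_add_right (mul_le_mul_of_nonneg_right hX_norm hnV0) 1
  have hW_norm : nW ≤ 1 + (opNorm Δ) * nW := by
    calc nW = opNorm (1 + -(Y * W)) := by rw [← sub_eq_add_neg, ← hW_fix]
      _ ≤ opNorm (1 : Matrix (Fin M) (Fin M) ℝ) + opNorm (-(Y * W)) := opNorm_add_le _ _
      _ = opNorm (1 : Matrix (Fin M) (Fin M) ℝ) + opNorm (Y * W) := by rw [opNorm_neg]
      _ ≤ 1 + opNorm Y * opNorm W := add_le_add opNorm_one_le (opNorm_mul_le _ _)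
      _ ≤ 1 + (opNorm Δ) * nW := by
          refine add_le_add_right (mul_le_mul_of_nonneg_right hY_norm hnW0) 1
  clear_value nV nW
  have hXdp_norm : opNorm (X * dp) ≤ (opNorm Δ) := by
    calc opNorm (X * dp) ≤ opNorm X * opNorm dp := opNorm_mul_le _ _
      _ ≤ (opNorm Δ) * 1 := mul_le_mul hX_norm hdp_norm (opNorm_nonneg _) hδ0
      _ = (opNorm Δ) := mul_one (opNorm Δ)
  have hC_norm : opNorm C ≤ nV * (opNorm Δ) := by
    calc opNorm C = opNorm (V * (X * dp)) := by rw [hC_eq, opNorm_neg]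
      _ ≤ opNorm V * opNorm (X * dp) := opNorm_mul_le _ _
      _ = nV * opNorm (X * dp) := by rw [hnV_def]
      _ ≤ nV * (opNorm Δ) := mul_le_mul_of_nonneg_left hXdp_norm hnV0
  have hE_norm : opNorm E ≤ nV * ((opNorm Δ) * (opNorm Δ)) := by
    calc opNorm E = opNorm (V * (X * (X * dp))) := by rw [hE_eq]
      _ ≤ opNorm V * opNorm (X * (X * dp)) := opNorm_mul_le _ _
      _ = nV * opNorm (X * (X * dp)) := by rw [hnV_def]
      _ ≤ nV * ((opNorm Δ) * (opNorm Δ)) := by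
          refine mul_le_mul_of_nonneg_left ?_ hnV0
          calc opNorm (X * (X * dp)) ≤ opNorm X * opNorm (X * dp) := opNorm_mul_le _ _
            _ ≤ (opNorm Δ) * (opNorm Δ) := mul_le_mul hX_norm hXdp_norm (opNorm_nonneg _) hδ0
  -- diagonal identities with L
  have hone : (1 : Matrix (Fin M) (Fin M) ℝ) = Matrix.diagonal (fun _ => (1:ℝ)) :=
    Matrix.diagonal_one.symm
  have hplam : ∀ k, p k * (l / lam k) = 1 - p k := by
    intro k
    rw [hp_def]
    field_simp [hlamne k, hlamlne k]
    ring
  have hdpL : dp * L = 1 - dp := by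
    rw [hL_diag, hdp_def, Matrix.diagonal_mul_diagonal, hone, Matrix.diagonal_sub]
    exact congrArg Matrix.diagonal (funext hplam)
  have hLdp : L * dp = 1 - dp := by
    rw [hL_diag, hdp_def, Matrix.diagonal_mul_diagonal, hone, Matrix.diagonal_sub]
    refine congrArg Matrix.diagonal (funext fun k => ?_)
    rw [mul_comm]
    exact hplam k
  have hBcd : B = C + dp := by rw [hC_def]; abel
  -- the trace identity
  have h1pΔ : (1 : Matrix (Fin M) (Fin M) ℝ) + Δ = (1 + Δ + L) - L := by abel
  have htr1 : (B ^ 2 * (1 + Δ)).trace = B.trace - ((B * L) * B).trace := by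
    have hBB : B * B * (1 + Δ) = B - B * (B * L) := by
      rw [h1pΔ, mul_sub]
      congr 1
      · rw [mul_assoc, hBA, mul_one]
      · rw [mul_assoc]
    rw [pow_two, hBB, Matrix.trace_sub, Matrix.trace_mul_comm B (B * L)]
  have hBL : B * L = C * L + (1 - dp) := by
    rw [hBcd, add_mul, hdpL]
  have hLB : L * B = (1 - dp) * W := by
    rw [hB2, ← mul_assoc, hLdp]
  have hkey : (B * L) * B
      = (C * (1 - dp) - C * ((1 - dp) * (Y * W))) + ((1 - dp) * dp + (1 - dp) * C) := by
    calc (B * L) * B = (C * L + (1 - dp)) * B := by rw [hBL]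
      _ = C * (L * B) + (1 - dp) * B := by rw [add_mul, mul_assoc]
      _ = C * ((1 - dp) * (1 - Y * W)) + (1 - dp) * (C + dp) := by
          rw [hLB, ← hW_fix, hW_fix, hBcd]
      _ = (C * (1 - dp) - C * ((1 - dp) * (Y * W))) + ((1 - dp) * dp + (1 - dp) * C) := by
          rw [mul_sub (1 - dp), mul_one, mul_sub C, mul_add (1 - dp)]
          abel
  -- traces of the explicit pieces
  have htrdp : dp.trace = ∑ k, p k := by rw [hdp_def, Matrix.trace_diagonal]
  have honemdp : (1 : Matrix (Fin M) (Fin M) ℝ) - dp = Matrix.diagonal (fun k => 1 - p k) := by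
    rw [hdp_def, hone, Matrix.diagonal_sub]

  have htr_1mdp_dp : ((1 - dp) * dp).trace = ∑ k, (1 - p k) * p k := by
    rw [honemdp, hdp_def, Matrix.diagonal_mul_diagonal, Matrix.trace_diagonal]
  have htrC1mdp : (C * (1 - dp)).trace = C.trace - (C * dp).trace := by
    rw [mul_sub, mul_one, Matrix.trace_sub]
  have htr1mdpC : ((1 - dp) * C).trace = C.trace - (C * dp).trace := by
    rw [sub_mul, one_mul, Matrix.trace_sub, Matrix.trace_mul_comm dp C]
  set S2 : ℝ := (C * ((1 - dp) * (Y * W))).trace with hS2_def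
  clear_value S2
  have htrB : B.trace = C.trace + ∑ k, p k := by rw [hBcd, Matrix.trace_add, htrdp]
  have hmain : (B ^ 2 * (1 + Δ)).trace
      = 2 * (C * dp).trace - C.trace + S2 + ∑ k, (p k * p k) := by
    rw [htr1, hkey, Matrix.trace_add, Matrix.trace_sub, htrC1mdp, Matrix.trace_add,
      htr_1mdp_dp, htr1mdpC, htrB, hS2_def]
    have : ∑ k, (1 - p k) * p k = (∑ k, p k) - ∑ k, (p k * p k) := by
      rw [← Finset.sum_sub_distrib]
      congr 1
      funext k
      ring
    rw [this]
    ring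
  -- rewrite C in terms of E
  have hCEd : C = E - dp * Δ * dp := by rw [hE_def]; abel
  have htrCdp : (C * dp).trace = (E * dp).trace - ∑ k, p k * Δ k k * (p k * p k) := by
    rw [hCEd, sub_mul, Matrix.trace_sub]
    congr 1
    rw [mul_assoc (dp * Δ) dp dp, hdp_def, Matrix.diagonal_mul_diagonal]
    exact trace_diag_sandwich p (fun i => p i * p i) Δ
  have htrC : C.trace = E.trace - ∑ k, p k * Δ k k * p k := by
    rw [hCEd, Matrix.trace_sub]
    congr 1
    rw [hdp_def]
    exact trace_diag_sandwich p p Δ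
  -- the sum of squares
  have hsum_eq : ∑ k, lam k ^ 2 / (lam k + l) ^ 2 = ∑ k, p k * p k := by
    congr 1
    funext k
    rw [hp_def]
    rw [div_mul_div_comm, ← pow_two, ← pow_two]
  -- final decomposition
  set T1 : ℝ := ∑ k, ((p k * Δ k k * p k) - 2 * (p k * Δ k k * (p k * p k))) with hT1_def
  clear_value T1
  have hdiff : (B ^ 2 * (1 + Δ)).trace - ∑ k, lam k ^ 2 / (lam k + l) ^ 2
      = T1 + (2 * (E * dp).trace - E.trace + S2) := by
    have hT1' : T1 = (∑ k, p k * Δ k k * p k) - 2 * ∑ k, p k * Δ k k * (p k * p k) := by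
      rw [hT1_def, Finset.sum_sub_distrib, Finset.mul_sum]
    rw [hmain, htrCdp, htrC, hsum_eq, hT1']
    ring
    -- entry and trace bounds
  have hcard : (Fintype.card (Fin M) : ℝ) = (M : ℝ) := by simp
  have htrEdp : |(E * dp).trace| ≤ (M : ℝ) * (nV * ((opNorm Δ) * (opNorm Δ))) := by
    have h1 : opNorm (E * dp) ≤ nV * ((opNorm Δ) * (opNorm Δ)) := by
      calc opNorm (E * dp) ≤ opNorm E * opNorm dp := opNorm_mul_le _ _
        _ ≤ (nV * ((opNorm Δ) * (opNorm Δ))) * 1 :=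
            mul_le_mul hE_norm hdp_norm (opNorm_nonneg _)
              (mul_nonneg hnV0 (mul_nonneg hδ0 hδ0))
        _ = nV * ((opNorm Δ) * (opNorm Δ)) := mul_one _
    calc |(E * dp).trace| ≤ (Fintype.card (Fin M) : ℝ) * opNorm (E * dp) := abs_trace_le _
      _ ≤ (M : ℝ) * (nV * ((opNorm Δ) * (opNorm Δ))) := by
          rw [hcard]
          exact mul_le_mul_of_nonneg_left h1 (Nat.cast_nonneg M)
  have htrE : |E.trace| ≤ (M : ℝ) * (nV * ((opNorm Δ) * (opNorm Δ))) := by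
    calc |E.trace| ≤ (Fintype.card (Fin M) : ℝ) * opNorm E := abs_trace_le _
      _ ≤ (M : ℝ) * (nV * ((opNorm Δ) * (opNorm Δ))) := by
          rw [hcard]
          exact mul_le_mul_of_nonneg_left hE_norm (Nat.cast_nonneg M)
  have h1mdp_norm : opNorm (1 - dp) ≤ 1 := by
    rw [honemdp]
    apply opNorm_diagonal_le _ _ zero_le_one
    intro i
    rw [abs_of_nonneg (by linarith [hp_lt i])]
    linarith [hp_pos i]
  have hS2b : |S2| ≤ (M : ℝ) * ((nV * (opNorm Δ)) * ((opNorm Δ) * nW)) := by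
    have h1 : opNorm (C * ((1 - dp) * (Y * W))) ≤ (nV * (opNorm Δ)) * ((opNorm Δ) * nW) := by
      have h2 : opNorm ((1 - dp) * (Y * W)) ≤ (opNorm Δ) * nW := by
        calc opNorm ((1 - dp) * (Y * W)) ≤ opNorm (1 - dp) * opNorm (Y * W) :=
              opNorm_mul_le _ _
          _ ≤ 1 * ((opNorm Δ) * nW) := by
              refine mul_le_mul h1mdp_norm ?_ (opNorm_nonneg _) zero_le_one
              calc opNorm (Y * W) ≤ opNorm Y * opNorm W := opNorm_mul_le _ _
                _ = opNorm Y * nW := by rw [hnW_def]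
                _ ≤ (opNorm Δ) * nW := mul_le_mul_of_nonneg_right hY_norm hnW0
          _ = (opNorm Δ) * nW := one_mul _
      calc opNorm (C * ((1 - dp) * (Y * W)))
          ≤ opNorm C * opNorm ((1 - dp) * (Y * W)) := opNorm_mul_le _ _
        _ ≤ (nV * (opNorm Δ)) * ((opNorm Δ) * nW) :=
            mul_le_mul hC_norm h2 (opNorm_nonneg _) (mul_nonneg hnV0 hδ0)
    calc |S2| ≤ (Fintype.card (Fin M) : ℝ) * opNorm (C * ((1 - dp) * (Y * W))) := by
          rw [hS2_def]; exact abs_trace_le _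
      _ ≤ (M : ℝ) * ((nV * (opNorm Δ)) * ((opNorm Δ) * nW)) := by
          rw [hcard]
          exact mul_le_mul_of_nonneg_left h1 (Nat.cast_nonneg M)
  have hT1b : |T1| ≤ (opNorm Δ) * ∑ k, p k * p k := by
    rw [hT1_def]
    calc |∑ k, ((p k * Δ k k * p k) - 2 * (p k * Δ k k * (p k * p k)))|
        ≤ ∑ k, |(p k * Δ k k * p k) - 2 * (p k * Δ k k * (p k * p k))| :=
          Finset.abs_sum_le_sum_abs _ _
      _ ≤ ∑ k, (p k * p k) * (opNorm Δ) := by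
          refine Finset.sum_le_sum fun k _ => ?_
          have habs : |Δ k k| ≤ (opNorm Δ) := opNorm_entry_le Δ k k
          have h1 : (p k * Δ k k * p k) - 2 * (p k * Δ k k * (p k * p k))
              = (p k * p k) * (Δ k k * (1 - 2 * p k)) := by ring
          rw [h1, abs_mul, abs_of_pos (mul_pos (hp_pos k) (hp_pos k)), abs_mul]
          have h2 : |1 - 2 * p k| ≤ 1 := by
            rw [abs_le]
            constructor <;> [linarith [hp_lt k]; linarith [hp_pos k]]
          have h3 : |Δ k k| * |1 - 2 * p k| ≤ (opNorm Δ) := by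
            calc |Δ k k| * |1 - 2 * p k| ≤ (opNorm Δ) * 1 :=
                  mul_le_mul habs h2 (abs_nonneg _) hδ0
              _ = (opNorm Δ) := mul_one (opNorm Δ)
          exact mul_le_mul_of_nonneg_left h3 (mul_pos (hp_pos k) (hp_pos k)).le
      _ = (opNorm Δ) * ∑ k, p k * p k := by rw [← Finset.sum_mul, mul_comm]
  -- put everything together
  rw [hdiff, hsum_eq]
  have habs2 : |2 * (E * dp).trace - E.trace + S2|
      ≤ 2 * |(E * dp).trace| + |E.trace| + |S2| := by
    calc |2 * (E * dp).trace - E.trace + S2|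
        ≤ |2 * (E * dp).trace - E.trace| + |S2| := abs_add_le _ _
      _ ≤ |2 * (E * dp).trace| + |E.trace| + |S2| := by
          have := abs_sub (2 * (E * dp).trace) E.trace
          linarith
      _ = 2 * |(E * dp).trace| + |E.trace| + |S2| := by
          rw [abs_mul]
          norm_num
  generalize hgen : opNorm Δ = d at hV_norm hW_norm hδ0 hδ2 htrEdp htrE hS2b hT1b ⊢
  have hd1 : (0:ℝ) < 1 - d := by linarith
  have hd12 : (0:ℝ) ≤ 1 - 2 * d := by linarith
  have hdd : (0:ℝ) ≤ d * d := mul_nonneg hδ0 hδ0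
  have hddd : (0:ℝ) ≤ d * (d * d) := mul_nonneg hδ0 hdd
  have hkey2 : (1:ℝ) ≤ (1 + 2 * d) * (1 - d) := by
    have h6 : (0:ℝ) ≤ d * (1 - 2 * d) := mul_nonneg hδ0 hd12
    linarith [h6]
  have hnV2 : nV ≤ 1 + 2 * d := by
    have h1 : nV * (1 - d) ≤ 1 := by linarith [hV_norm]
    have h2 : nV * (1 - d) ≤ (1 + 2 * d) * (1 - d) := le_trans h1 hkey2
    exact le_of_mul_le_mul_right h2 hd1
  have hnW2 : nW ≤ 1 + 2 * d := by
    have h1 : nW * (1 - d) ≤ 1 := by linarith [hW_norm]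
    have h2 : nW * (1 - d) ≤ (1 + 2 * d) * (1 - d) := le_trans h1 hkey2
    exact le_of_mul_le_mul_right h2 hd1
  have hab : nV * nW ≤ (1 + 2 * d) * (1 + 2 * d) :=
    mul_le_mul hnV2 hnW2 hnW0 (by linarith)
  have hstep : 3 * nV + nV * nW ≤ 4 + 10 * d + 4 * (d * d) := by
    linarith [hnV2, hab]
  have hfin : 3 * nV + nV * nW ≤ (1 + d) * (5 + 4 * d + 4 * d ^ 2) := by
    linarith [hstep, hdd, hddd, hδ2, hδ0]
  have hMnn : (0:ℝ) ≤ (M:ℝ) := Nat.cast_nonneg M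
  calc |T1 + (2 * (E * dp).trace - E.trace + S2)|
      ≤ |T1| + |2 * (E * dp).trace - E.trace + S2| := abs_add_le _ _
    _ ≤ (d * ∑ k, p k * p k)
        + (2 * ((M : ℝ) * (nV * (d * d))) + (M : ℝ) * (nV * (d * d))
            + (M : ℝ) * ((nV * d) * (d * nW))) := by
        have := habs2
        linarith [hT1b, htrEdp, htrE, hS2b]
    _ = d * (∑ k, p k * p k) + (M : ℝ) * ((3 * nV + nV * nW) * d ^ 2) := by ring
    _ ≤ d * (∑ k, p k * p k)
        + (M : ℝ) * (1 + d) * d ^ 2 * (5 + 4 * d + 4 * d ^ 2) := by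
        have h4 : (M : ℝ) * ((3 * nV + nV * nW) * d ^ 2)
            ≤ (M : ℝ) * (1 + d) * d ^ 2 * (5 + 4 * d + 4 * d ^ 2) := by
          have h5 : (3 * nV + nV * nW) * d ^ 2
              ≤ ((1 + d) * (5 + 4 * d + 4 * d ^ 2)) * d ^ 2 :=
            mul_le_mul_of_nonneg_right hfin (sq_nonneg d)
          calc (M : ℝ) * ((3 * nV + nV * nW) * d ^ 2)
              ≤ (M : ℝ) * (((1 + d) * (5 + 4 * d + 4 * d ^ 2)) * d ^ 2) :=
                mul_le_mul_of_nonneg_left h5 hMnn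
            _ = (M : ℝ) * (1 + d) * d ^ 2 * (5 + 4 * d + 4 * d ^ 2) := by ring
        linarith
end

section
/- Let P̄, Δ be M×M matrices with ‖P̄‖_op < 1 and ‖Δ‖_op = δ < 1/2, with Δ symmetric. Let B⁽¹⁾ = P̄ − P̄ΔP̄. Then Tr((B⁽¹⁾)²(I_M + Δ)) ≤ Tr(P̄²)(1 + δ) + M δ² (1 + δ), where P̄ is symmetric positive semidefinite. -/
open Matrix
open scoped Matrix.Norms.L2Operator RealInnerProductSpace

section Aux

variable {n : Type*} [Fintype n] [DecidableEq n]

lemma ctr' {m : Type*} (A : Matrix n m ℝ) : Aᴴ = Aᵀ := by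
  ext i j; simp [Matrix.conjTranspose_apply]

lemma dot_le' (A : Matrix n n ℝ) (x : n → ℝ) :
    x ⬝ᵥ (A *ᵥ x) ≤ ‖A‖ * (x ⬝ᵥ x) := by
  set y : EuclideanSpace ℝ n := (WithLp.equiv 2 (n → ℝ)).symm x with hy
  have hAy : toEuclideanLin A y = (WithLp.equiv 2 (n → ℝ)).symm (A *ᵥ x) :=
    Matrix.toEuclideanLin_apply_piLp_toLp A x
  have h1 : x ⬝ᵥ (A *ᵥ x) = ⟪y, toEuclideanLin A y⟫ := by
    rw [hAy]
    simp [PiLp.inner_apply, dotProduct, hy, WithLp.equiv_symm_apply, PiLp.toLp_apply, mul_comm]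
  have h2 : ‖toEuclideanLin A y‖ ≤ ‖A‖ * ‖y‖ := by
    have h := (LinearMap.toContinuousLinearMap (toEuclideanLin A)).le_opNorm y
    rw [LinearMap.coe_toContinuousLinearMap'] at h
    exact h
  have h3 : x ⬝ᵥ x = ‖y‖ * ‖y‖ := by
    rw [← real_inner_self_eq_norm_mul_norm]
    rw [hy]; simp only [WithLp.equiv_symm_apply, PiLp.inner_apply, dotProduct, RCLike.inner_apply, conj_trivial]
  calc x ⬝ᵥ (A *ᵥ x) = ⟪y, toEuclideanLin A y⟫ := h1
    _ ≤ ‖y‖ * ‖toEuclideanLin A y‖ := real_inner_le_norm _ _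
    _ ≤ ‖y‖ * (‖A‖ * ‖y‖) := by
        have : (0:ℝ) ≤ ‖y‖ := norm_nonneg _
        nlinarith [h2]
    _ = ‖A‖ * (x ⬝ᵥ x) := by rw [h3]; ring

lemma psd_one_sub' {S : Matrix n n ℝ} (hS : Sᵀ = S) {c : ℝ} (hc : ‖S‖ ≤ c) :
    (c • (1 : Matrix n n ℝ) - S).PosSemidef := by
  apply Matrix.PosSemidef.of_dotProduct_mulVec_nonneg
  · show (c • (1 : Matrix n n ℝ) - S)ᴴ = _
    rw [conjTranspose_sub, conjTranspose_smul, conjTranspose_one, ctr', hS, star_trivial]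
  · intro x
    have hx : star x = x := by funext i; simp
    rw [hx, sub_mulVec, smul_mulVec, one_mulVec, dotProduct_sub, dotProduct_smul,
      smul_eq_mul]
    have h1 := dot_le' S x
    have h2 : (0:ℝ) ≤ x ⬝ᵥ x := by
      exact Finset.sum_nonneg fun i _ => mul_self_nonneg _
    nlinarith

lemma trace_nonneg_psd' {A : Matrix n n ℝ} (hA : A.PosSemidef) : 0 ≤ A.trace := by
  rw [Matrix.trace]
  apply Finset.sum_nonneg
  intro i _
  have h := hA.dotProduct_mulVec_nonneg (Pi.single i 1)
  have hx : star (Pi.single i 1 : n → ℝ) = Pi.single i 1 := by funext j; simp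
  rw [hx] at h
  simpa [Matrix.mulVec_single, dotProduct, Pi.single_apply] using h

open scoped MatrixOrder in
lemma trace_mul_nonneg' {A B : Matrix n n ℝ} (hA : A.PosSemidef) (hB : B.PosSemidef) :
    0 ≤ (A * B).trace := by
  have h1 : A * B = CFC.sqrt A * (CFC.sqrt A * B) := by
    rw [← Matrix.mul_assoc, CFC.sqrt_mul_sqrt_self A hA.nonneg]
  rw [h1, Matrix.trace_mul_comm]
  have h3 : CFC.sqrt A * B * CFC.sqrt A = CFC.sqrt A * B * (CFC.sqrt A)ᴴ := by
    rw [(CFC.sqrt_nonneg A).posSemidef.1]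
  exact trace_nonneg_psd' (by rw [h3]; exact hB.mul_mul_conjTranspose_same _)

lemma trace_mul_le_psd' {A B : Matrix n n ℝ} (hA : A.PosSemidef) {c : ℝ} (hc : ‖B‖ ≤ c) :
    (A * B).trace ≤ c * A.trace := by
  set S : Matrix n n ℝ := (2⁻¹ : ℝ) • (B + Bᵀ) with hSdef
  have hSsym : Sᵀ = S := by
    rw [hSdef, transpose_smul, transpose_add, transpose_transpose, add_comm]
  have hBt : ‖Bᵀ‖ = ‖B‖ := by rw [← ctr']; exact Matrix.l2_opNorm_conjTranspose B
  have hSnorm : ‖S‖ ≤ c := by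
    rw [hSdef]
    calc ‖(2⁻¹ : ℝ) • (B + Bᵀ)‖ = 2⁻¹ * ‖B + Bᵀ‖ := by
          rw [norm_smul]; norm_num
      _ ≤ 2⁻¹ * (‖B‖ + ‖Bᵀ‖) := by
          have := norm_add_le B Bᵀ
          nlinarith
      _ ≤ c := by rw [hBt]; linarith
  have hAt : Aᵀ = A := by rw [← ctr']; exact hA.1
  have hTrS : (A * S).trace = (A * B).trace := by
    have h1 : (A * Bᵀ).trace = (A * B).trace := by
      rw [← Matrix.trace_transpose (A * Bᵀ), transpose_mul, transpose_transpose, hAt,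
        Matrix.trace_mul_comm]
    rw [hSdef, Matrix.mul_smul, Matrix.trace_smul, mul_add, Matrix.trace_add, h1, smul_eq_mul]
    ring
  have hpsd := psd_one_sub' hSsym hSnorm
  have h0 := trace_mul_nonneg' hA hpsd
  have hexp : A * (c • (1 : Matrix n n ℝ) - S) = c • A - A * S := by
    rw [mul_sub, Matrix.mul_smul, mul_one]
  rw [hexp, Matrix.trace_sub, Matrix.trace_smul, smul_eq_mul] at h0
  linarith [hTrS ▸ h0]

lemma trace_mul_ge_psd' {A B : Matrix n n ℝ} (hA : A.PosSemidef) {c : ℝ} (hc : ‖B‖ ≤ c) :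
    -(c * A.trace) ≤ (A * B).trace := by
  have h := trace_mul_le_psd' hA (B := -B) (c := c) (by rwa [norm_neg])
  rw [Matrix.mul_neg, Matrix.trace_neg] at h
  linarith

end Aux

theorem stmt_15 (M : ℕ) (P Δ : Matrix (Fin M) (Fin M) ℝ)
    (hP : P.PosSemidef) (hPnorm : opNorm P < 1)
    (hsym : Δᵀ = Δ) (hδ : opNorm Δ < 1 / 2) :
    let δ : ℝ := opNorm Δ
    let B1 : Matrix (Fin M) (Fin M) ℝ := P - P * Δ * P
    (B1 ^ 2 * (1 + Δ)).trace
      ≤ (P ^ 2).trace * (1 + δ) + (M : ℝ) * δ ^ 2 * (1 + δ) := by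
  intro δ B1
  have hδnorm : ‖Δ‖ = δ := rfl
  have hδ0 : (0:ℝ) ≤ δ := norm_nonneg Δ
  have hδhalf : δ < 1/2 := hδ
  have hPn : ‖P‖ ≤ 1 := le_of_lt hPnorm
  have hPnn : (0:ℝ) ≤ ‖P‖ := norm_nonneg P
  have hPt : Pᵀ = P := by rw [← ctr']; exact hP.1
  have hΔH : Δᴴ = Δ := by rw [ctr', hsym]
  have hone : ‖(1 : Matrix (Fin M) (Fin M) ℝ)‖ ≤ 1 := by
    have h := Matrix.l2_opNorm_conjTranspose_mul_self (1 : Matrix (Fin M) (Fin M) ℝ)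
    rw [conjTranspose_one, mul_one] at h
    nlinarith [norm_nonneg (1 : Matrix (Fin M) (Fin M) ℝ)]
  -- positive semidefiniteness facts
  have h1P : ((1 : Matrix (Fin M) (Fin M) ℝ) - P).PosSemidef := by
    have := psd_one_sub' hPt hPn; rwa [one_smul] at this
  have h1PP : ((1 : Matrix (Fin M) (Fin M) ℝ) - P * P).PosSemidef := by
    have hn : ‖P * P‖ ≤ 1 := le_trans (Matrix.l2_opNorm_mul P P) (by nlinarith)
    have ht : (P * P)ᵀ = P * P := by rw [transpose_mul, hPt]
    have := psd_one_sub' ht hn; rwa [one_smul] at this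
  have h1Δ : ((1 : Matrix (Fin M) (Fin M) ℝ) + Δ).PosSemidef := by
    have hn : ‖-Δ‖ ≤ 1 := by rw [norm_neg, hδnorm]; linarith
    have ht : (-Δ)ᵀ = -Δ := by rw [transpose_neg, hsym]
    have := psd_one_sub' ht hn; rwa [one_smul, sub_neg_eq_add] at this
  have hA1 : (P * ((1 : Matrix (Fin M) (Fin M) ℝ) - P) * P).PosSemidef := by
    have := h1P.mul_mul_conjTranspose_same P; rwa [ctr', hPt] at this
  have hP3 : (P * P * P).PosSemidef := by
    have := hP.mul_mul_conjTranspose_same P; rwa [ctr', hPt] at this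
  have hPP : (P * P).PosSemidef := by
    have := (Matrix.PosSemidef.one (n := Fin M) (R := ℝ)).mul_mul_conjTranspose_same P
    rwa [mul_one, ctr', hPt] at this
  have hDPD : (Δ * (P * P) * Δ).PosSemidef := by
    have := hPP.mul_mul_conjTranspose_same Δ; rwa [hΔH] at this
  have hQ : (P * ((1 : Matrix (Fin M) (Fin M) ℝ) + Δ) * P).PosSemidef := by
    have := h1Δ.mul_mul_conjTranspose_same P; rwa [ctr', hPt] at this
  -- norm bounds
  have h1Δn : ‖(1 : Matrix (Fin M) (Fin M) ℝ) + Δ‖ ≤ 1 + δ := by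
    have := norm_add_le (1 : Matrix (Fin M) (Fin M) ℝ) Δ
    rw [hδnorm] at this; linarith
  have hQn : ‖P * ((1 : Matrix (Fin M) (Fin M) ℝ) + Δ) * P‖ ≤ 1 + δ := by
    have h1 := Matrix.l2_opNorm_mul (P * ((1 : Matrix (Fin M) (Fin M) ℝ) + Δ)) P
    have h2 := Matrix.l2_opNorm_mul P ((1 : Matrix (Fin M) (Fin M) ℝ) + Δ)
    have h3 : (0:ℝ) ≤ ‖(1 : Matrix (Fin M) (Fin M) ℝ) + Δ‖ := norm_nonneg _
    have h4 : (0:ℝ) ≤ ‖P * ((1 : Matrix (Fin M) (Fin M) ℝ) + Δ)‖ := norm_nonneg _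
    nlinarith [mul_le_mul_of_nonneg_right h2 hPnn]
  have hDDn : ‖Δ * Δ‖ ≤ δ ^ 2 := by
    have h1 := Matrix.l2_opNorm_mul Δ Δ
    rw [hδnorm] at h1; nlinarith
  -- trace identity
  have hB1 : B1 = P - P * Δ * P := rfl
  have expand : B1 ^ 2 * (1 + Δ) =
      P * P + P * (P * Δ) - P * (P * (Δ * P)) - P * (P * (Δ * (P * Δ)))
        - P * (Δ * (P * P)) - P * (Δ * (P * (P * Δ)))
        + P * (Δ * (P * (P * (Δ * P)))) + P * (Δ * (P * (P * (Δ * (P * Δ))))) := by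
    rw [hB1]; noncomm_ring
  have E0 : ((P * P * P) * Δ).trace = (P * (P * (P * Δ))).trace := by
    congr 1; noncomm_ring
  have E1 : (P * (P * (Δ * P))).trace = (P * (P * (P * Δ))).trace := by
    rw [show P * (P * (Δ * P)) = (P * (P * Δ)) * P from by noncomm_ring,
      Matrix.trace_mul_comm]
  have E2 : (P * (Δ * (P * P))).trace = (P * (P * (P * Δ))).trace := by
    rw [show P * (Δ * (P * P)) = (P * Δ) * (P * P) from by noncomm_ring,
      Matrix.trace_mul_comm]
    congr 1; noncomm_ring
  have E3 : (P * (Δ * (P * (P * Δ)))).trace = ((Δ * (P * P) * Δ) * P).trace := by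
    rw [Matrix.trace_mul_comm P (Δ * (P * (P * Δ)))]
    congr 1; noncomm_ring
  have E4 : (P * (P * (Δ * (P * Δ)))).trace = ((Δ * (P * P) * Δ) * P).trace := by
    rw [show P * (P * (Δ * (P * Δ))) = (P * (P * (Δ * P))) * Δ from by noncomm_ring,
      Matrix.trace_mul_comm]
    congr 1; noncomm_ring
  have E5 : (P * (Δ * (P * (P * (Δ * P))))).trace = ((Δ * (P * P) * Δ) * (P * P)).trace := by
    rw [Matrix.trace_mul_comm P (Δ * (P * (P * (Δ * P))))]
    congr 1; noncomm_ring
  have E6 : (P * (Δ * (P * (P * (Δ * (P * Δ)))))).trace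
      = ((Δ * (P * P) * Δ) * (P * (Δ * P))).trace := by
    rw [Matrix.trace_mul_comm P (Δ * (P * (P * (Δ * (P * Δ)))))]
    congr 1; noncomm_ring
  have hsplit : ((Δ * (P * P) * Δ) * (P * ((1 : Matrix (Fin M) (Fin M) ℝ) + Δ) * P)).trace
      = ((Δ * (P * P) * Δ) * (P * P)).trace + ((Δ * (P * P) * Δ) * (P * (Δ * P))).trace := by
    rw [show (Δ * (P * P) * Δ) * (P * ((1 : Matrix (Fin M) (Fin M) ℝ) + Δ) * P)
        = (Δ * (P * P) * Δ) * (P * P) + (Δ * (P * P) * Δ) * (P * (Δ * P)) from by noncomm_ring,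
      Matrix.trace_add]
  have hA1Δ : ((P * ((1 : Matrix (Fin M) (Fin M) ℝ) - P) * P) * Δ).trace
      = (P * (P * Δ)).trace - (P * (P * (P * Δ))).trace := by
    rw [show (P * ((1 : Matrix (Fin M) (Fin M) ℝ) - P) * P) * Δ
        = P * (P * Δ) - P * (P * (P * Δ)) from by noncomm_ring, Matrix.trace_sub]
  have hid : (B1 ^ 2 * (1 + Δ)).trace =
      ((P * ((1 : Matrix (Fin M) (Fin M) ℝ) - P) * P) * Δ).trace - ((P * P * P) * Δ).trace
        + (P * P).trace - 2 * ((Δ * (P * P) * Δ) * P).trace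
        + ((Δ * (P * P) * Δ) * (P * ((1 : Matrix (Fin M) (Fin M) ℝ) + Δ) * P)).trace := by
    rw [expand]
    simp only [Matrix.trace_add, Matrix.trace_sub]
    rw [E1, E2, E3, E4, E5, E6, hsplit, hA1Δ, E0]
    ring
  -- bounds
  have hbA1 : ((P * ((1 : Matrix (Fin M) (Fin M) ℝ) - P) * P) * Δ).trace
      ≤ δ * (P * ((1 : Matrix (Fin M) (Fin M) ℝ) - P) * P).trace :=
    trace_mul_le_psd' hA1 (le_of_eq hδnorm)
  have hbP3 : -(δ * (P * P * P).trace) ≤ ((P * P * P) * Δ).trace :=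
    trace_mul_ge_psd' hP3 (le_of_eq hδnorm)
  have htA1 : (P * ((1 : Matrix (Fin M) (Fin M) ℝ) - P) * P).trace
      = (P * P).trace - (P * P * P).trace := by
    rw [show P * ((1 : Matrix (Fin M) (Fin M) ℝ) - P) * P = P * P - P * P * P from by
      noncomm_ring, Matrix.trace_sub]
  have hbDP : 0 ≤ ((Δ * (P * P) * Δ) * P).trace := trace_mul_nonneg' hDPD hP
  have hbQ : ((Δ * (P * P) * Δ) * (P * ((1 : Matrix (Fin M) (Fin M) ℝ) + Δ) * P)).trace
      ≤ (1 + δ) * (Δ * (P * P) * Δ).trace := trace_mul_le_psd' hDPD hQn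
  have hbD1 : (Δ * (P * P) * Δ).trace ≤ (Δ * Δ).trace := by
    have hpsd : (Δ * ((1 : Matrix (Fin M) (Fin M) ℝ) - P * P) * Δ).PosSemidef := by
      have := h1PP.mul_mul_conjTranspose_same Δ; rwa [hΔH] at this
    have h0 := trace_nonneg_psd' hpsd
    rw [show Δ * ((1 : Matrix (Fin M) (Fin M) ℝ) - P * P) * Δ
        = Δ * Δ - Δ * (P * P) * Δ from by noncomm_ring, Matrix.trace_sub] at h0
    linarith
  have hbD2 : (Δ * Δ).trace ≤ (M : ℝ) * δ ^ 2 := by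
    have hpsd := psd_one_sub' (S := Δ * Δ) (by rw [transpose_mul, hsym]) hDDn
    have h0 := trace_nonneg_psd' hpsd
    rw [Matrix.trace_sub, Matrix.trace_smul, Matrix.trace_one, smul_eq_mul] at h0
    simp only [Fintype.card_fin] at h0
    linarith
  have htP3 : 0 ≤ (P * P * P).trace := trace_nonneg_psd' hP3
  have htDPD : 0 ≤ (Δ * (P * P) * Δ).trace := trace_nonneg_psd' hDPD
  have hbQ2 : (1 + δ) * (Δ * (P * P) * Δ).trace ≤ (1 + δ) * ((M : ℝ) * δ ^ 2) := by
    have h1 : (0:ℝ) ≤ 1 + δ := by linarith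
    exact mul_le_mul_of_nonneg_left (le_trans hbD1 hbD2) h1
  have hPsq : (P ^ 2).trace = (P * P).trace := by rw [pow_two]
  rw [htA1] at hbA1
  rw [hid, hPsq]
  clear_value δ B1
  linarith [hbA1, hbP3, hbDP, hbQ, hbQ2]
end
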